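/- (Mandelbaum's counterexample) For R = [[1, -2],[1, 1]], there exists a continuous driving function f : [0,∞) → ℝ² with f(0) ≥ 0 for which the Skorokhod problem admits two distinct solutions (g, m) and (ḡ, m̄) with g ≠ ḡ. -/

import Mathlib

open Set Matrix

/-- The Skorokhod problem on `[0,∞)` in the nonnegative quadrant of `ℝ²` with
reflection matrix `R` and driving function `f`: `(g, m)` is a solution. -/
def IsSkorokhod (R : Matrix (Fin 2) (Fin 2) ℝ) (f g m : ℝ → Fin 2 → ℝ) : Prop :=
  ContinuousOn g (Set.Ici 0) ∧ ContinuousOn m (Set.Ici 0) ∧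
  (∀ t ∈ Set.Ici (0:ℝ), ∀ j, 0 ≤ g t j) ∧
  m 0 = 0 ∧
  (∀ j, MonotoneOn (fun t => m t j) (Set.Ici 0)) ∧
  (∀ t ∈ Set.Ici (0:ℝ), g t = f t + R.mulVec (m t)) ∧
  (∀ j, ∀ s t, 0 ≤ s → s ≤ t → (∀ r ∈ Set.Icc s t, 0 < g r j) → m s j = m t j)

/-- Uniqueness of solutions of the Skorokhod problem with matrix `R`, for every
continuous driving function `f` with `f 0 ≥ 0`. -/
def SkorokhodUnique (R : Matrix (Fin 2) (Fin 2) ℝ) : Prop :=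
  ∀ f : ℝ → Fin 2 → ℝ, ContinuousOn f (Set.Ici 0) → (∀ j, 0 ≤ f 0 j) →
    ∀ g m g' m', IsSkorokhod R f g m → IsSkorokhod R f g' m' →
      ∀ t ∈ Set.Ici (0:ℝ), g t = g' t ∧ m t = m' t

/-!
The non-uniqueness is produced by oscillations accumulating at `t = 0`, so the whole construction
is self-similar. A function `φ` on the window `[3, 12]` with `φ 12 = 4 • φ 3` extends to `(0, ∞)` by
`t ↦ 4ᵏ • φ (t / 4ᵏ)`, and every condition of the Skorokhod problem is invariant under this
rescaling: continuity, sign, monotonicity and the relation `g = f + R m` are checked block by block,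
the complementarity condition is local and so is checked near each point of one block, and
continuity at `0` follows from the bound `‖φ t‖ ≤ C t`. It therefore suffices to exhibit on
`[3, 12]` two piecewise linear solutions `(path₁, reg₁)` and `(path₂, reg₂)` with the same driver;
they differ at `t = 4`.
-/

open Filter Topology

theorem eq_of_forall_eventually_eq_Icc {X : Type*} {μ : ℝ → X} {s t : ℝ} (hst : s ≤ t)
    (h : ∀ r ∈ Icc s t, ∀ᶠ y in 𝓝 r, μ y = μ r) : μ s = μ t := by
  have hloc : IsLocallyConstant fun x : Icc s t => μ x :=
    (IsLocallyConstant.iff_eventually_eq _).mpr fun x =>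
      (continuous_subtype_val.tendsto x).eventually (h x x.2)
  exact hloc.apply_eq_of_isPreconnected
    (isPreconnected_iff_preconnectedSpace.mp isPreconnected_Icc).isPreconnected_univ
    (x := ⟨s, left_mem_Icc.mpr hst⟩) (y := ⟨t, right_mem_Icc.mpr hst⟩) trivial trivial

namespace SelfSimilar

variable {E : Type*} {b : ℕ} {a t : ℝ} {k : ℤ}

/-- `Int.log b (t / a)` is the `k` with `t / b ^ k ∈ [a, a * b)`, so `extend b a φ` is the
extension of `φ` from that window with `extend b a φ (b * t) = b • extend b a φ t`. -/
noncomputable def extend [AddCommGroup E] [Module ℝ E] (b : ℕ) (a : ℝ) (φ : ℝ → E) (t : ℝ) : E :=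
  if 0 < t then ((b : ℝ) ^ Int.log b (t / a)) • φ (t / (b : ℝ) ^ Int.log b (t / a)) else 0

theorem log_div_eq_of_mem_Ico (hb : 1 < b) (ha : 0 < a)
    (ht : t ∈ Ico (a * b ^ k) (a * b ^ (k + 1))) : Int.log b (t / a) = k := by
  have hta : 0 < t / a := div_pos ((mul_pos ha (zpow_pos (by positivity) k)).trans_le ht.1) ha
  refine le_antisymm ?_ ?_
  · refine Int.lt_add_one_iff.mp ((Int.lt_zpow_iff_log_lt hb hta).mp ?_)
    rw [div_lt_iff₀' ha]
    exact ht.2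
  · rw [← Int.zpow_le_iff_le_log hb hta, le_div_iff₀' ha]
    exact ht.1

theorem mem_Ico_log_div (hb : 1 < b) (ha : 0 < a) (ht : 0 < t) :
    t ∈ Ico (a * b ^ Int.log b (t / a)) (a * b ^ (Int.log b (t / a) + 1)) := by
  constructor
  · rw [← le_div_iff₀' ha]
    exact Int.zpow_log_le_self hb (div_pos ht ha)
  · rw [← div_lt_iff₀' ha]
    exact Int.lt_zpow_succ_log_self hb _

theorem div_zpow_mem_Icc (hb : 1 < b) (ht : t ∈ Icc (a * b ^ k) (a * b ^ (k + 1))) :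
    t / (b : ℝ) ^ k ∈ Icc a (a * b) := by
  have hbk : (0 : ℝ) < (b : ℝ) ^ k := zpow_pos (by positivity) k
  rw [zpow_add_one₀ (by positivity), ← mul_assoc] at ht
  exact ⟨(le_div_iff₀ hbk).mpr ht.1, (div_le_iff₀ hbk).mpr (by linarith [ht.2])⟩

theorem tendsto_nhds_of_forall_block {X : Type*} {F : ℝ → X} {l : Filter X} (hb : 1 < b)
    (ha : 0 < a) (ht : 0 < t)
    (h : ∀ k : ℤ, t ∈ Icc (a * b ^ k) (a * b ^ (k + 1)) →
      Tendsto F (𝓝[Icc (a * b ^ k) (a * b ^ (k + 1))] t) l) :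
    Tendsto F (𝓝 t) l := by
  set k := Int.log b (t / a)
  obtain ⟨hk₁, hk₂⟩ := mem_Ico_log_div hb ha ht
  have hb1 : (1 : ℝ) < b := mod_cast hb
  have hmono : ∀ {i j : ℤ}, i < j → a * (b : ℝ) ^ i < a * b ^ j := fun hij => by gcongr
  have hnhds : Icc (a * b ^ (k - 1)) (a * b ^ (k + 1)) ∈ 𝓝 t :=
    Icc_mem_nhds ((hmono (sub_one_lt k)).trans_le hk₁) hk₂
  rw [← nhdsWithin_eq_nhds.mpr hnhds, ← Icc_union_Icc_eq_Icc (b := a * b ^ k)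
    (hmono (sub_one_lt k)).le (hmono (lt_add_one k)).le, nhdsWithin_union]
  refine tendsto_sup.mpr ⟨?_, h k ⟨hk₁, hk₂.le⟩⟩
  -- `t` need not lie in the closed block `k - 1`; if it does not, the filter there is `⊥`.
  have hprev := h (k - 1)
  rw [sub_add_cancel] at hprev
  by_cases hk : t ∈ Icc (a * b ^ (k - 1)) (a * b ^ k)
  · exact hprev hk
  · rw [notMem_closure_iff_nhdsWithin_eq_bot.mp (by rwa [isClosed_Icc.closure_eq])]
    exact tendsto_bot

section Module

variable [AddCommGroup E] [Module ℝ E] {φ : ℝ → E}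

theorem extend_of_nonpos (ht : t ≤ 0) : extend b a φ t = 0 := if_neg ht.not_gt

theorem extend_apply {ι : Type*} (φ : ℝ → ι → ℝ) (t : ℝ) (i : ι) :
    extend b a φ t i = extend b a (fun x => φ x i) t := by
  unfold extend
  split_ifs <;> rfl

theorem extend_of_mem_Ico (hb : 1 < b) (ha : 0 < a)
    (ht : t ∈ Ico (a * b ^ k) (a * b ^ (k + 1))) :
    extend b a φ t = ((b : ℝ) ^ k) • φ (t / (b : ℝ) ^ k) := by
  have ht0 : 0 < t := (mul_pos ha (zpow_pos (by positivity) k)).trans_le ht.1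
  rw [extend, if_pos ht0, log_div_eq_of_mem_Ico hb ha ht]

theorem extend_of_mem_Icc (hb : 1 < b) (ha : 0 < a) (hφ : φ (a * b) = (b : ℝ) • φ a)
    (ht : t ∈ Icc (a * b ^ k) (a * b ^ (k + 1))) :
    extend b a φ t = ((b : ℝ) ^ k) • φ (t / (b : ℝ) ^ k) := by
  have hb0 : (0 : ℝ) < b := by positivity
  rcases ht.2.lt_or_eq with hlt | rfl
  · exact extend_of_mem_Ico hb ha ⟨ht.1, hlt⟩
  · have hk : a * b ^ (k + 1) ∈ Ico (a * (b : ℝ) ^ (k + 1)) (a * b ^ (k + 1 + 1)) :=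
      ⟨le_rfl, by gcongr; exacts [mod_cast hb, by omega]⟩
    rw [extend_of_mem_Ico hb ha hk, mul_div_cancel_right₀ _ (zpow_pos hb0 _).ne',
      zpow_add_one₀ hb0.ne', mul_left_comm, mul_div_cancel_left₀ _ (zpow_pos hb0 k).ne', hφ,
      smul_smul]

end Module

section Normed

variable [NormedAddCommGroup E] [NormedSpace ℝ E] {φ : ℝ → E}

theorem continuousOn_extend_block (hb : 1 < b) (ha : 0 < a) (hφ : φ (a * b) = (b : ℝ) • φ a)
    (hc : ContinuousOn φ (Icc a (a * b))) (k : ℤ) :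
    ContinuousOn (extend b a φ) (Icc (a * b ^ k) (a * b ^ (k + 1))) :=
  ((hc.comp (continuousOn_id.div_const _) fun _ ht => div_zpow_mem_Icc hb ht).const_smul
    ((b : ℝ) ^ k)).congr fun _ ht => extend_of_mem_Icc hb ha hφ ht

theorem continuousAt_extend_zero (hb : 1 < b) (ha : 0 < a)
    (hc : ContinuousOn φ (Icc a (a * b))) : ContinuousAt (extend b a φ) 0 := by
  obtain ⟨C, hC⟩ := isCompact_Icc.exists_bound_of_continuousOn hc
  have hC0 : 0 ≤ C :=
    (norm_nonneg _).trans (hC a ⟨le_rfl, le_mul_of_one_le_right ha.le (mod_cast hb.le)⟩)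
  have hbound : ∀ t, ‖extend b a φ t‖ ≤ C / a * |t| := by
    intro t
    rcases le_or_gt t 0 with ht | ht
    · rw [extend_of_nonpos ht, norm_zero]
      positivity
    · have hmem := mem_Ico_log_div hb ha ht
      have hbk : (0 : ℝ) < (b : ℝ) ^ Int.log b (t / a) := zpow_pos (by positivity) _
      rw [extend_of_mem_Ico hb ha hmem, norm_smul, Real.norm_of_nonneg hbk.le, abs_of_pos ht]
      calc (b : ℝ) ^ Int.log b (t / a) * ‖φ (t / (b : ℝ) ^ Int.log b (t / a))‖
          ≤ (b : ℝ) ^ Int.log b (t / a) * C :=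
            mul_le_mul_of_nonneg_left
              (hC _ (div_zpow_mem_Icc hb (Ico_subset_Icc_self hmem))) hbk.le
        _ ≤ t / a * C := by gcongr; rw [le_div_iff₀' ha]; exact hmem.1
        _ = C / a * t := by ring
  rw [ContinuousAt, extend_of_nonpos le_rfl]
  refine squeeze_zero_norm hbound ?_
  simpa using (continuous_abs.const_mul (C / a)).tendsto 0

theorem continuousOn_extend (hb : 1 < b) (ha : 0 < a) (hφ : φ (a * b) = (b : ℝ) • φ a)
    (hc : ContinuousOn φ (Icc a (a * b))) : ContinuousOn (extend b a φ) (Ici 0) := by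
  intro t ht
  rcases (mem_Ici.mp ht).eq_or_lt with rfl | ht
  · exact (continuousAt_extend_zero hb ha hc).continuousWithinAt
  · exact ContinuousAt.continuousWithinAt <| tendsto_nhds_of_forall_block hb ha ht fun k hk =>
      continuousOn_extend_block hb ha hφ hc k t hk

end Normed

section Order

variable [AddCommGroup E] [PartialOrder E] [Module ℝ E] [PosSMulMono ℝ E] {φ : ℝ → E}

theorem extend_nonneg (hb : 1 < b) (ha : 0 < a) (hφ : ∀ x ∈ Icc a (a * b), 0 ≤ φ x) (t : ℝ) :
    0 ≤ extend b a φ t := by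
  rcases le_or_gt t 0 with ht | ht
  · rw [extend_of_nonpos ht]
  · have hmem := mem_Ico_log_div hb ha ht
    rw [extend_of_mem_Ico hb ha hmem]
    exact smul_nonneg (zpow_pos (by positivity) _).le
      (hφ _ (div_zpow_mem_Icc hb (Ico_subset_Icc_self hmem)))

theorem monotoneOn_extend_block (hb : 1 < b) (ha : 0 < a) (hφ : φ (a * b) = (b : ℝ) • φ a)
    (hm : MonotoneOn φ (Icc a (a * b))) (k : ℤ) :
    MonotoneOn (extend b a φ) (Icc (a * b ^ k) (a * b ^ (k + 1))) := by
  intro s hs t ht hst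
  have hbk : (0 : ℝ) < (b : ℝ) ^ k := zpow_pos (by positivity) k
  rw [extend_of_mem_Icc hb ha hφ hs, extend_of_mem_Icc hb ha hφ ht]
  exact smul_le_smul_of_nonneg_left (hm (div_zpow_mem_Icc hb hs) (div_zpow_mem_Icc hb ht)
    (div_le_div_of_nonneg_right hst hbk.le)) hbk.le

theorem monotoneOn_extend_Icc (hb : 1 < b) (ha : 0 < a) (hφ : φ (a * b) = (b : ℝ) • φ a)
    (hm : MonotoneOn φ (Icc a (a * b))) (k : ℤ) (n : ℕ) :
    MonotoneOn (extend b a φ) (Icc (a * b ^ k) (a * b ^ (k + n))) := by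
  have hb1 : (1 : ℝ) ≤ b := mod_cast hb.le
  have hle : ∀ {i j : ℤ}, i ≤ j → a * (b : ℝ) ^ i ≤ a * b ^ j := fun hij => by gcongr
  induction n with
  | zero => simp
  | succ n ih =>
    have h := ih.union_right (monotoneOn_extend_block hb ha hφ hm (k + n))
      (isGreatest_Icc (hle (by omega))) (isLeast_Icc (hle (by omega)))
    rw [Nat.cast_succ, ← add_assoc]
    rwa [Icc_union_Icc_eq_Icc (hle (by omega)) (hle (by omega))] at h

theorem monotoneOn_extend (hb : 1 < b) (ha : 0 < a) (hφ : φ (a * b) = (b : ℝ) • φ a)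
    (hm : MonotoneOn φ (Icc a (a * b))) (h0 : 0 ≤ φ a) :
    MonotoneOn (extend b a φ) (Ici 0) := by
  have ha_mem : a ∈ Icc a (a * b) := ⟨le_rfl, le_mul_of_one_le_right ha.le (mod_cast hb.le)⟩
  intro s hs t ht hst
  rcases (mem_Ici.mp hs).eq_or_lt with rfl | hs
  · rw [extend_of_nonpos le_rfl]
    exact extend_nonneg hb ha (fun x hx => h0.trans (hm ha_mem hx hx.1)) t
  · have hs_mem := mem_Ico_log_div hb ha hs
    have ht_mem := mem_Ico_log_div hb ha (hs.trans_le hst)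
    have hlog : Int.log b (s / a) ≤ Int.log b (t / a) :=
      Int.log_mono_right (div_pos hs ha) (div_le_div_of_nonneg_right hst ha.le)
    obtain ⟨n, hn⟩ : ∃ n : ℕ, Int.log b (t / a) + 1 = Int.log b (s / a) + n :=
      ⟨(Int.log b (t / a) + 1 - Int.log b (s / a)).toNat, by omega⟩
    rw [hn] at ht_mem
    exact monotoneOn_extend_Icc hb ha hφ hm _ n ⟨hs_mem.1, hst.trans ht_mem.2.le⟩
      ⟨hs_mem.1.trans hst, ht_mem.2.le⟩ hst

end Order

theorem eventually_extend_eq_of_pos {ψ μ : ℝ → ℝ} (hb : 1 < b) (ha : 0 < a)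
    (hψ : ψ (a * b) = (b : ℝ) • ψ a) (hμ : μ (a * b) = (b : ℝ) • μ a)
    (hloc : ∀ x ∈ Icc a (a * b), 0 < ψ x → ∀ᶠ y in 𝓝[Icc a (a * b)] x, μ y = μ x)
    (ht : 0 < extend b a ψ t) : ∀ᶠ y in 𝓝 t, extend b a μ y = extend b a μ t := by
  have ht0 : 0 < t := by
    by_contra h
    exact ht.ne' (extend_of_nonpos (not_lt.mp h))
  refine tendsto_pure.mp (tendsto_nhds_of_forall_block hb ha ht0 fun k hk => tendsto_pure.mpr ?_)
  have hbk : (0 : ℝ) < (b : ℝ) ^ k := zpow_pos (by positivity) k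
  rw [extend_of_mem_Icc hb ha hψ hk, smul_eq_mul] at ht
  have hdiv : Tendsto (· / (b : ℝ) ^ k) (𝓝[Icc (a * b ^ k) (a * b ^ (k + 1))] t)
      (𝓝[Icc a (a * b)] (t / (b : ℝ) ^ k)) :=
    (continuous_id.div_const _).continuousWithinAt.tendsto_nhdsWithin
      fun _ hy => div_zpow_mem_Icc hb hy
  filter_upwards [hdiv.eventually
      (hloc _ (div_zpow_mem_Icc hb hk) (pos_of_mul_pos_right ht hbk.le)),
    self_mem_nhdsWithin] with y hy hyk
  rw [extend_of_mem_Icc hb ha hμ hyk, extend_of_mem_Icc hb ha hμ hk, hy]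

theorem isSkorokhod_extend {R : Matrix (Fin 2) (Fin 2) ℝ} {f g m : ℝ → Fin 2 → ℝ} (hb : 1 < b)
    (ha : 0 < a) (hg : g (a * b) = (b : ℝ) • g a) (hm : m (a * b) = (b : ℝ) • m a)
    (hg_cont : ContinuousOn g (Icc a (a * b))) (hm_cont : ContinuousOn m (Icc a (a * b)))
    (hg_nonneg : ∀ x ∈ Icc a (a * b), 0 ≤ g x) (hm_mono : MonotoneOn m (Icc a (a * b)))
    (hm_nonneg : 0 ≤ m a) (heq : ∀ x ∈ Icc a (a * b), g x = f x + R *ᵥ m x)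
    (hcompl : ∀ j, ∀ x ∈ Icc a (a * b), 0 < g x j →
      ∀ᶠ y in 𝓝[Icc a (a * b)] x, m y j = m x j) :
    IsSkorokhod R (extend b a f) (extend b a g) (extend b a m) := by
  refine ⟨continuousOn_extend hb ha hg hg_cont, continuousOn_extend hb ha hm hm_cont,
    fun t _ j => extend_nonneg hb ha hg_nonneg t j, extend_of_nonpos le_rfl,
    fun j s hs t ht hst => monotoneOn_extend hb ha hm hm_mono hm_nonneg hs ht hst j,
    fun t ht => ?_, fun j s t _ hst hpos => ?_⟩
  · rcases (mem_Ici.mp ht).eq_or_lt with rfl | ht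
    · simp [extend_of_nonpos]
    · have hmem := mem_Ico_log_div hb ha ht
      rw [extend_of_mem_Ico hb ha hmem, extend_of_mem_Ico hb ha hmem, extend_of_mem_Ico hb ha hmem,
        heq _ (div_zpow_mem_Icc hb (Ico_subset_Icc_self hmem)), smul_add, mulVec_smul]
  · simp only [extend_apply] at hpos ⊢
    exact eq_of_forall_eventually_eq_Icc hst fun r hr =>
      eventually_extend_eq_of_pos hb ha (congrFun hg j) (congrFun hm j) (hcompl j) (hpos r hr)

end SelfSimilar
namespace Mandelbaum

open SelfSimilar

/- Two solutions on the window `[3, 12]` with the common driver `drive`. The formulas are meant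
only on this window: `path₂_eq` fails outside it. -/

noncomputable def reg₁ (x : ℝ) : Fin 2 → ℝ := ![min 8 (max 2 (3 * x - 10)), min 4 (3 * x - 8)]

noncomputable def path₁ (x : ℝ) : Fin 2 → ℝ :=
  ![max 0 (min (6 * x - 36) (36 - 3 * x)), max 0 (min (3 * x - 12) (24 - 3 * x))]

noncomputable def reg₂ (x : ℝ) : Fin 2 → ℝ := ![max 4 (3 * x - 20), min 8 (max 2 (3 * x - 16))]

noncomputable def path₂ (x : ℝ) : Fin 2 → ℝ :=
  ![max 0 (min (6 * x - 18) (18 - 3 * x)), max (max 0 (12 - 3 * x)) (3 * x - 24)]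

noncomputable def drive (x : ℝ) : Fin 2 → ℝ := path₁ x - !![1, -2; 1, 1] *ᵥ reg₁ x

theorem mulVec_eq (v : Fin 2 → ℝ) : !![1, -2; 1, 1] *ᵥ v = ![v 0 - 2 * v 1, v 0 + v 1] := by
  rw [mulVec_fin_two]
  simp [sub_eq_add_neg]

theorem reg₁_scaling : reg₁ (3 * (4 : ℕ)) = ((4 : ℕ) : ℝ) • reg₁ 3 := by
  ext j; fin_cases j <;> norm_num [reg₁]

theorem reg₂_scaling : reg₂ (3 * (4 : ℕ)) = ((4 : ℕ) : ℝ) • reg₂ 3 := by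
  ext j; fin_cases j <;> norm_num [reg₂]

theorem path₁_scaling : path₁ (3 * (4 : ℕ)) = ((4 : ℕ) : ℝ) • path₁ 3 := by
  ext j; fin_cases j <;> norm_num [path₁]

theorem path₂_scaling : path₂ (3 * (4 : ℕ)) = ((4 : ℕ) : ℝ) • path₂ 3 := by
  ext j; fin_cases j <;> norm_num [path₂]

theorem drive_scaling : drive (3 * (4 : ℕ)) = ((4 : ℕ) : ℝ) • drive 3 := by
  rw [drive, drive, path₁_scaling, reg₁_scaling, mulVec_smul, smul_sub]

theorem continuous_reg₁ : Continuous reg₁ := by unfold reg₁; fun_prop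

theorem continuous_reg₂ : Continuous reg₂ := by unfold reg₂; fun_prop

theorem continuous_path₁ : Continuous path₁ := by unfold path₁; fun_prop

theorem continuous_path₂ : Continuous path₂ := by unfold path₂; fun_prop

theorem continuous_drive : Continuous drive :=
  continuous_path₁.sub (continuous_const.matrix_mulVec continuous_reg₁)

theorem monotone_reg₁ : Monotone reg₁ := fun x y hxy => by
  simp only [reg₁, Pi.le_def, Fin.forall_fin_two, cons_val_zero, cons_val_one]
  constructor <;> gcongr

theorem monotone_reg₂ : Monotone reg₂ := fun x y hxy => by
  simp only [reg₂, Pi.le_def, Fin.forall_fin_two, cons_val_zero, cons_val_one]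
  constructor <;> gcongr

theorem path₁_nonneg (x : ℝ) : 0 ≤ path₁ x := by simp [path₁, Pi.le_def, Fin.forall_fin_two]

theorem path₂_nonneg (x : ℝ) : 0 ≤ path₂ x := by simp [path₂, Pi.le_def, Fin.forall_fin_two]

theorem path₂_eq {x : ℝ} (hx : x ∈ Icc 3 12) :
    path₂ x = drive x + !![1, -2; 1, 1] *ᵥ reg₂ x := by
  obtain ⟨h3, h12⟩ := hx
  rw [drive, mulVec_eq, mulVec_eq]
  ext j
  fin_cases j <;>
    simp only [path₂, path₁, reg₁, reg₂, Fin.zero_eta, Fin.mk_one, Pi.add_apply, Pi.sub_apply,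
      cons_val_zero, cons_val_one] <;>
    grind

theorem eventually_reg₁_eq {x : ℝ} (j : Fin 2) (hx : 0 < path₁ x j) :
    ∀ᶠ y in 𝓝 x, reg₁ y j = reg₁ x j := by
  fin_cases j <;> simp only [path₁, reg₁, Fin.zero_eta, Fin.mk_one, cons_val_zero,
    cons_val_one] at hx ⊢
  · filter_upwards [lt_mem_nhds (show 6 < x by grind)] with y hy
    grind
  · filter_upwards [lt_mem_nhds (show 4 < x by grind)] with y hy
    grind

theorem eventually_reg₂_eq {x : ℝ} (j : Fin 2) (hx : 0 < path₂ x j) :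
    ∀ᶠ y in 𝓝 x, reg₂ y j = reg₂ x j := by
  fin_cases j <;> simp only [path₂, reg₂, Fin.zero_eta, Fin.mk_one, cons_val_zero,
    cons_val_one] at hx ⊢
  · filter_upwards [gt_mem_nhds (show x < 6 by grind)] with y hy
    grind
  · obtain hx4 | hx8 : x < 4 ∨ 8 < x := by grind
    · filter_upwards [gt_mem_nhds hx4] with y hy
      grind
    · filter_upwards [lt_mem_nhds hx8] with y hy
      grind

theorem isSkorokhod₁ :
    IsSkorokhod !![1, -2; 1, 1] (extend 4 3 drive) (extend 4 3 path₁) (extend 4 3 reg₁) :=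
  isSkorokhod_extend (by norm_num) (by norm_num) path₁_scaling reg₁_scaling
    continuous_path₁.continuousOn continuous_reg₁.continuousOn (fun x _ => path₁_nonneg x)
    (monotone_reg₁.monotoneOn _) (by norm_num [reg₁, Pi.le_def, Fin.forall_fin_two])
    (fun x _ => (sub_add_cancel _ _).symm)
    fun j _ _ hx => eventually_nhdsWithin_of_eventually_nhds (eventually_reg₁_eq j hx)

theorem isSkorokhod₂ :
    IsSkorokhod !![1, -2; 1, 1] (extend 4 3 drive) (extend 4 3 path₂) (extend 4 3 reg₂) :=
  isSkorokhod_extend (by norm_num) (by norm_num) path₂_scaling reg₂_scaling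
    continuous_path₂.continuousOn continuous_reg₂.continuousOn (fun x _ => path₂_nonneg x)
    (monotone_reg₂.monotoneOn _) (by norm_num [reg₂, Pi.le_def, Fin.forall_fin_two])
    (fun x hx => path₂_eq (by norm_num at hx; exact hx))
    fun j _ _ hx => eventually_nhdsWithin_of_eventually_nhds (eventually_reg₂_eq j hx)

theorem extend_path₁_ne_path₂ : extend 4 3 path₁ 4 ≠ extend 4 3 path₂ 4 := by
  have h4 : (4 : ℝ) ∈ Ico (3 * ((4 : ℕ) : ℝ) ^ (0 : ℤ)) (3 * ((4 : ℕ) : ℝ) ^ ((0 : ℤ) + 1)) := by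
    norm_num
  rw [extend_of_mem_Ico (by norm_num) (by norm_num) h4,
    extend_of_mem_Ico (by norm_num) (by norm_num) h4]
  intro h
  have := congrFun h 0
  norm_num [path₁, path₂] at this

end Mandelbaum

theorem mandelbaum_counterexample :
    ∃ f : ℝ → Fin 2 → ℝ, ContinuousOn f (Set.Ici 0) ∧ (∀ j, 0 ≤ f 0 j) ∧
      ∃ g m gbar mbar : ℝ → Fin 2 → ℝ,
        IsSkorokhod (!![1, -2; 1, 1]) f g m ∧
        IsSkorokhod (!![1, -2; 1, 1]) f gbar mbar ∧
        ∃ t ∈ Set.Ici (0:ℝ), g t ≠ gbar t :=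
  ⟨SelfSimilar.extend 4 3 Mandelbaum.drive,
    SelfSimilar.continuousOn_extend (by norm_num) (by norm_num) Mandelbaum.drive_scaling
      Mandelbaum.continuous_drive.continuousOn,
    fun j => by rw [SelfSimilar.extend_of_nonpos le_rfl]; rfl,
    _, _, _, _, Mandelbaum.isSkorokhod₁, Mandelbaum.isSkorokhod₂, 4, by norm_num,
    Mandelbaum.extend_path₁_ne_path₂⟩
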